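/- [First part of Claim 3 in the proof of Lemma 2] Assume there are no redundant actions for the decision-maker and that ū is concave on Δ(Ω) (i.e., ū(t·π + (1−t)·π') ≥ t·ū(π) + (1−t)·ū(π') for all π, π' ∈ Δ(Ω) and t ∈ [0,1]). Let a, a' ∈ Â and let π belong to the intrinsic (relative) interior of BR⁻¹(a) := {π ∈ Δ(Ω) : v(a,π) = v̄(π)}. Then u(a', π) ≥ u(a, π). -/

import Mathlib

/-!
If `a` is optimal for the decision-maker at `π`, recommending `a` is available to the experts,
so `u(a, π) ≤ ū(π)`. Absence of redundant actions gives a belief `ρ` at which `a'` is the unique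
best reply; by continuity this persists on an initial piece of the segment from `ρ` to `π`, where
`ū` therefore agrees with the affine map `u(a', ·)`. Concavity of `ū` along the segment then
forces `ū(π) ≤ u(a', π)`.
-/

open Finset

variable {Ω A : Type*}

/-- Expected payoff of mixed action `α` at belief `π` (bilinear extension of `u`). -/
noncomputable def pay [Fintype Ω] [Fintype A] (u : A → Ω → ℝ) (α : A → ℝ) (π : Ω → ℝ) : ℝ :=
  ∑ a, ∑ ω, α a * π ω * u a ω

/-- Expected payoff of pure action `a` at belief `π`. -/
noncomputable def payP [Fintype Ω] (u : A → Ω → ℝ) (a : A) (π : Ω → ℝ) : ℝ :=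
  ∑ ω, π ω * u a ω

/-- Pure best replies of the decision-maker at belief `π`. -/
def br [Fintype Ω] (v : A → Ω → ℝ) (π : Ω → ℝ) : Set A :=
  {a | ∀ a', payP v a' π ≤ payP v a π}

/-- Mixed best replies of the decision-maker at belief `π`. -/
def BR [Fintype Ω] [Fintype A] (v : A → Ω → ℝ) (π : Ω → ℝ) : Set (A → ℝ) :=
  {α ∈ stdSimplex ℝ A | ∀ α' ∈ stdSimplex ℝ A, pay v α' π ≤ pay v α π}

/-- The expert value function `ū(π) = max_{α ∈ BR(π)} u(α, π)`. -/
noncomputable def ubar [Fintype Ω] [Fintype A] (u v : A → Ω → ℝ) (π : Ω → ℝ) : ℝ :=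
  sSup ((fun α => pay u α π) '' BR v π)

/-- The decision-maker value function `v̄(π) = max_a v(a, π)`. -/
noncomputable def vbar [Fintype Ω] [Fintype A] (v : A → Ω → ℝ) (π : Ω → ℝ) : ℝ :=
  ⨆ a, payP v a π

/-- Actions that are a best reply to some belief. -/
def Ahat [Fintype Ω] [Fintype A] (v : A → Ω → ℝ) : Set A :=
  {a | ∃ π ∈ stdSimplex ℝ Ω, a ∈ br v π}

/-- Mixed actions supported on `B`. -/
def simplexOn [Fintype A] (B : Set A) : Set (A → ℝ) :=
  {α | α ∈ stdSimplex ℝ A ∧ ∀ a ∉ B, α a = 0}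

/-- `(lam, p)` is a splitting of the prior. -/
def IsSplitting [Fintype Ω] {S : Type*} [Fintype S] (lam : S → ℝ) (p : S → Ω → ℝ)
    (prior : Ω → ℝ) : Prop :=
  (∀ s, 0 < lam s) ∧ (∑ s, lam s) = 1 ∧ (∀ s, p s ∈ stdSimplex ℝ Ω) ∧
    ∀ ω, (∑ s, lam s * p s ω) = prior ω

/-- `(lam, p)` is an optimal splitting of the prior: it attains `cav ū (prior)`. -/
def IsOptimalSplitting [Fintype Ω] [Fintype A] (u v : A → Ω → ℝ) {S : Type*} [Fintype S]
    (lam : S → ℝ) (p : S → Ω → ℝ) (prior : Ω → ℝ) : Prop :=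
  IsSplitting lam p prior ∧
    ∀ (T : Type) [Fintype T] [Nonempty T] (mu : T → ℝ) (q : T → Ω → ℝ),
      IsSplitting mu q prior →
        (∑ t, mu t * ubar u v (q t)) ≤ ∑ s, lam s * ubar u v (p s)

/-- Beliefs at which `a` is optimal for the decision-maker. -/
def BRinv [Fintype Ω] [Fintype A] (v : A → Ω → ℝ) (a : A) : Set (Ω → ℝ) :=
  {π ∈ stdSimplex ℝ Ω | payP v a π = vbar v π}

/-- No redundant actions for the decision-maker. -/
def NoRedundantDM [Fintype Ω] [Fintype A] (v : A → Ω → ℝ) : Prop :=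
  ∀ B : Set A, B.Nonempty → B ⊂ Ahat v →
    ∃ π ∈ stdSimplex ℝ Ω, ∀ a ∈ B, payP v a π < vbar v π

/-- No redundant actions for the experts. -/
def NoRedundantExperts [Fintype Ω] (u : A → Ω → ℝ) : Prop :=
  ∀ a a' : A, a ≠ a' → ∃ ω, u a ω ≠ u a' ω

/-- The expert value function `ū` is concave on the simplex. -/
def UbarConcave [Fintype Ω] [Fintype A] (u v : A → Ω → ℝ) : Prop :=
  ∀ π ∈ stdSimplex ℝ Ω, ∀ π' ∈ stdSimplex ℝ Ω, ∀ t ∈ Set.Icc (0 : ℝ) 1,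
    t * ubar u v π + (1 - t) * ubar u v π' ≤ ubar u v (fun ω => t * π ω + (1 - t) * π' ω)

section

variable [Fintype Ω]

lemma payP_add (u : A → Ω → ℝ) (c : A) (s t : ℝ) (π ρ : Ω → ℝ) :
    payP u c (fun ω => s * π ω + t * ρ ω) = s * payP u c π + t * payP u c ρ := by
  simp only [payP, add_mul, sum_add_distrib, mul_sum, mul_assoc]

lemma continuous_payP (u : A → Ω → ℝ) (c : A) : Continuous (payP u c) := by
  unfold payP; fun_prop

variable [Fintype A]

lemma pay_eq_sum (u : A → Ω → ℝ) (α : A → ℝ) (π : Ω → ℝ) :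
    pay u α π = ∑ c, α c * payP u c π := by
  simp only [pay, payP, mul_sum, mul_assoc]

lemma pay_single [DecidableEq A] (u : A → Ω → ℝ) (b : A) (π : Ω → ℝ) :
    pay u (Pi.single b 1) π = payP u b π := by
  simp [pay_eq_sum, Pi.single_apply]

lemma payP_le_vbar (v : A → Ω → ℝ) (c : A) (π : Ω → ℝ) : payP v c π ≤ vbar v π :=
  le_ciSup (f := fun c => payP v c π) (Set.finite_range _).bddAbove c

lemma vbar_eq_payP_of_mem_br {v : A → Ω → ℝ} {b : A} {π : Ω → ℝ} (hb : b ∈ br v π) :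
    vbar v π = payP v b π :=
  haveI : Nonempty A := ⟨b⟩
  le_antisymm (ciSup_le hb) (payP_le_vbar v b π)

lemma mem_br_of_payP_eq_vbar {v : A → Ω → ℝ} {b : A} {π : Ω → ℝ}
    (hb : payP v b π = vbar v π) : b ∈ br v π :=
  fun c => hb ▸ payP_le_vbar v c π

lemma single_mem_BR [DecidableEq A] {v : A → Ω → ℝ} {b : A} {π : Ω → ℝ} (hb : b ∈ br v π) :
    Pi.single b 1 ∈ BR v π := by
  refine ⟨single_mem_stdSimplex ℝ b, fun α hα => ?_⟩
  rw [pay_single, pay_eq_sum]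
  calc ∑ c, α c * payP v c π ≤ ∑ c, α c * payP v b π :=
        sum_le_sum fun c _ => mul_le_mul_of_nonneg_left (hb c) (hα.1 c)
    _ = payP v b π := by rw [← sum_mul, hα.2, one_mul]

lemma eq_single_of_le_sum_mul [DecidableEq A] {f : A → ℝ} {b : A} (hb : ∀ c ≠ b, f c < f b)
    {α : A → ℝ} (hα : α ∈ stdSimplex ℝ A) (hle : f b ≤ ∑ c, α c * f c) :
    α = Pi.single b 1 := by
  have hgap_nonneg : ∀ c, 0 ≤ α c * (f b - f c) := fun c => by
    refine mul_nonneg (hα.1 c) ?_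
    rcases eq_or_ne c b with rfl | hc
    · exact (sub_self _).ge
    · exact (sub_pos.2 (hb c hc)).le
  have hgap : ∑ c, α c * (f b - f c) = 0 := by
    refine le_antisymm ?_ (sum_nonneg fun c _ => hgap_nonneg c)
    simp only [mul_sub, sum_sub_distrib, ← sum_mul, hα.2, one_mul]
    linarith
  have hzero : ∀ c ≠ b, α c = 0 := fun c hc =>
    (mul_eq_zero.1 ((sum_eq_zero_iff_of_nonneg fun c _ => hgap_nonneg c).1 hgap c
      (mem_univ c))).resolve_right (sub_pos.2 (hb c hc)).ne'
  have hone : α b = 1 := by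
    rw [← hα.2, sum_eq_single_of_mem b (mem_univ b) fun c _ => hzero c]
  ext c
  rcases eq_or_ne c b with rfl | hc
  · simp [hone]
  · simp [hzero c hc, hc]

lemma BR_eq_singleton_of_strict [DecidableEq A] {v : A → Ω → ℝ} {b : A} {π : Ω → ℝ}
    (hb : ∀ c ≠ b, payP v c π < payP v b π) : BR v π = {Pi.single b 1} := by
  refine Set.eq_singleton_iff_unique_mem.2 ⟨single_mem_BR fun c => ?_, fun α hα => ?_⟩
  · rcases eq_or_ne c b with rfl | hc
    exacts [le_rfl, (hb c hc).le]
  · refine eq_single_of_le_sum_mul hb hα.1 ?_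
    rw [← pay_eq_sum, ← pay_single]
    exact hα.2 _ (single_mem_stdSimplex ℝ b)

lemma ubar_eq_payP_of_strict {u v : A → Ω → ℝ} {b : A} {π : Ω → ℝ}
    (hb : ∀ c ≠ b, payP v c π < payP v b π) : ubar u v π = payP u b π := by
  classical
  rw [ubar, BR_eq_singleton_of_strict hb, Set.image_singleton, csSup_singleton, pay_single]

lemma payP_le_ubar (u : A → Ω → ℝ) {v : A → Ω → ℝ} {b : A} {π : Ω → ℝ} (hb : b ∈ br v π) :
    payP u b π ≤ ubar u v π := by
  classical
  have hbdd : BddAbove ((fun α => pay u α π) '' BR v π) :=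
    ((isCompact_stdSimplex ℝ A).bddAbove_image (by unfold pay; fun_prop)).mono
      (Set.image_mono fun α hα => hα.1)
  exact le_csSup hbdd ⟨Pi.single b 1, single_mem_BR hb, pay_single u b π⟩

lemma eventually_strict_best_reply {v : A → Ω → ℝ} {b : A} {ρ : Ω → ℝ}
    (hb : ∀ c ≠ b, payP v c ρ < payP v b ρ) :
    ∀ᶠ π in nhds ρ, ∀ c ≠ b, payP v c π < payP v b π := by
  refine Filter.eventually_all.2 fun c => ?_
  rcases eq_or_ne c b with rfl | hc
  · exact .of_forall fun _ h => absurd rfl h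
  · exact (((continuous_payP v c).tendsto ρ).eventually_lt
      ((continuous_payP v b).tendsto ρ) (hb c hc)).mono fun _ h _ => h

lemma ubar_le_payP_of_strict {u v : A → Ω → ℝ} (hconc : UbarConcave u v) {b : A}
    {ρ π : Ω → ℝ} (hρ : ρ ∈ stdSimplex ℝ Ω) (hπ : π ∈ stdSimplex ℝ Ω)
    (hb : ∀ c ≠ b, payP v c ρ < payP v b ρ) : ubar u v π ≤ payP u b π := by
  set γ : ℝ → Ω → ℝ := fun t ω => t * π ω + (1 - t) * ρ ω
  have hγ : Filter.Tendsto γ (nhdsWithin 0 (Set.Ioi 0)) (nhds ρ) := by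
    have : Continuous γ := by fun_prop
    simpa [γ] using (this.tendsto 0).mono_left nhdsWithin_le_nhds
  obtain ⟨t, hγt, ht⟩ :=
    ((hγ.eventually (eventually_strict_best_reply hb)).and (Ioo_mem_nhdsGT one_pos)).exists
  have hconc_t := hconc π hπ ρ hρ t ⟨ht.1.le, ht.2.le⟩
  rw [ubar_eq_payP_of_strict hb, ubar_eq_payP_of_strict hγt, payP_add] at hconc_t
  exact le_of_mul_le_mul_left (by linarith) ht.1

lemma exists_strict_best_reply {v : A → Ω → ℝ} (hnr : NoRedundantDM v) {a a' : A}
    (ha : a ∈ Ahat v) (ha' : a' ∈ Ahat v) (hne : a ≠ a') :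
    ∃ ρ ∈ stdSimplex ℝ Ω, ∀ c ≠ a', payP v c ρ < payP v a' ρ := by
  obtain ⟨ρ, hρ, hlt⟩ := hnr (Ahat v \ {a'}) ⟨a, ha, hne⟩
    ⟨Set.sdiff_subset, fun hsub => (hsub ha').2 rfl⟩
  have : Nonempty A := ⟨a⟩
  obtain ⟨b, hb⟩ := Finite.exists_max fun c => payP v c ρ
  have hbA : b ∈ Ahat v := ⟨ρ, hρ, hb⟩
  have hba' : b = a' := by
    by_contra hba'
    exact (hlt b ⟨hbA, hba'⟩).ne (vbar_eq_payP_of_mem_br hb).symm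
  subst hba'
  refine ⟨ρ, hρ, fun c hc => lt_of_not_ge fun hcb => ?_⟩
  have hcA : c ∈ Ahat v := ⟨ρ, hρ, fun c' => (hb c').trans hcb⟩
  exact (hlt c ⟨hcA, hc⟩).not_ge ((vbar_eq_payP_of_mem_br hb).trans_le hcb)

end

theorem conflict_of_interest_relint_general {Ω A : Type*} [Fintype Ω] [Fintype A]
    (u v : A → Ω → ℝ) (hnr : NoRedundantDM v) (hconc : UbarConcave u v)
    (a a' : A) (ha : a ∈ Ahat v) (ha' : a' ∈ Ahat v)
    (π : Ω → ℝ) (hπ : π ∈ intrinsicInterior ℝ (BRinv v a)) :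
    payP u a π ≤ payP u a' π := by
  obtain ⟨hπ, hπa⟩ := intrinsicInterior_subset hπ
  rcases eq_or_ne a a' with rfl | hne
  · exact le_rfl
  obtain ⟨ρ, hρ, hρa'⟩ := exists_strict_best_reply hnr ha ha' hne
  calc payP u a π ≤ ubar u v π := payP_le_ubar u (mem_br_of_payP_eq_vbar hπa)
    _ ≤ payP u a' π := ubar_le_payP_of_strict hconc hρ hπ hρa'

/-- First part of Claim 3 in the proof of Lemma 2. -/
theorem conflict_of_interest_relint {Ω A : Type*} [Fintype Ω] [Nonempty Ω] [Fintype A] [Nonempty A]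
    (u v : A → Ω → ℝ) (hnr : NoRedundantDM v) (hconc : UbarConcave u v)
    (a a' : A) (ha : a ∈ Ahat v) (ha' : a' ∈ Ahat v)
    (π : Ω → ℝ) (hπ : π ∈ intrinsicInterior ℝ (BRinv v a)) :
    payP u a π ≤ payP u a' π :=
  conflict_of_interest_relint_general u v hnr hconc a a' ha ha' π hπ
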